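/- arXiv:2605.02560 — 7 statements merged into one kernel-verified Lean document; each statement's English description precedes it below -/
import Mathlib

section
/- Let N ≥ 1, d ≥ 1, let Q be an (N+1)×(N+1) real matrix satisfying the SBP assumptions with boundary matrix B, and set S := 2Q − B. Let f be a symmetric two-point flux, Φloc a local factor, r a nodal quantity, and g_L, g_R surface data, with staggered DG fluxes Γ as defined. Then for every node j ∈ {0,…,N}, the flux-differencing formula recovers the DGSEM residual: Γ_{(j,j−1)} − Γ_{(j,j+1)} = −∑_{m=0}^N S_{jm} ( f_{(j,m)} + Φloc_j ∘ (r_m − r_j) ) + δ_{j0} g_L − δ_{jN} g_R, where for j = 0 the flux Γ_{(0,−1)} := g_L is used and for j = N the flux Γ_{(N,N+1)} := g_R is used, and δ is the Kronecker delta. -/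
/-- Flux-differencing formula recovers the DGSEM residual at every node.
Nodes are indexed by `{0,…,N}` (naturals `≤ N`), states are vectors in `ℝ^d` (`Fin d → ℝ`),
`*` on `Fin d → ℝ` is the Hadamard product. `B` is the boundary matrix, `Q` satisfies the
SBP assumptions, `S := 2Q − B`, `f` is a symmetric two-point flux, `Φloc` a local factor,
`r` a nodal quantity, `gL, gR` surface data, and `Γ` the staggered DG fluxes. -/
theorem stmt_0 (N d : ℕ) (hN : 1 ≤ N) (hd : 1 ≤ d)
    (Q B S : ℕ → ℕ → ℝ)
    (hB : ∀ j k, j ≤ N → k ≤ N →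
      B j k = if j = k then (if j = 0 then (-1 : ℝ) else if j = N then 1 else 0) else 0)
    (hQB : ∀ j k, j ≤ N → k ≤ N → Q j k + Q k j = B j k)
    (hQrow : ∀ j, j ≤ N → ∑ k ∈ Finset.range (N + 1), Q j k = 0)
    (hS : ∀ j k, j ≤ N → k ≤ N → S j k = 2 * Q j k - B j k)
    (f : ℕ → ℕ → Fin d → ℝ)
    (hf : ∀ j k, j ≤ N → k ≤ N → f j k = f k j)
    (Φloc r : ℕ → Fin d → ℝ)
    (gL gR : Fin d → ℝ)
    (Γ : ℕ → ℕ → Fin d → ℝ)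
    (hΓ : ∀ j k, j ≤ N → k ≤ N → (k = j + 1 ∨ j = k + 1) →
      Γ j k =
        (∑ l ∈ Finset.range (min j k + 1), ∑ m ∈ Finset.range (N + 1), S l m • f l m)
          + Φloc j * (∑ l ∈ Finset.range (min j k + 1), ∑ m ∈ Finset.range (N + 1),
              S l m • (r m - r l))
          + (2 : ℝ) • (Φloc j * (r 0 - r j))) :
    ∀ j, j ≤ N →
      (if j = 0 then gL else Γ j (j - 1)) - (if j = N then gR else Γ j (j + 1)) =
        -(∑ m ∈ Finset.range (N + 1), S j m • (f j m + Φloc j * (r m - r j)))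
          + (if j = 0 then gL else 0) - (if j = N then gR else 0) := by
  have hBsymm : ∀ l m, l ≤ N → m ≤ N → B l m = B m l := by
    intro l m hl hm
    rw [hB l m hl hm, hB m l hm hl]
    by_cases h : l = m
    · subst h; rfl
    · simp [h, Ne.symm h]
  have hskew : ∀ l m, l ≤ N → m ≤ N → S l m = -S m l := by
    intro l m hl hm
    have h1 := hS l m hl hm
    have h2 := hS m l hm hl
    have h3 := hQB l m hl hm
    have h4 := hBsymm l m hl hm
    linarith
  have hBrow : ∀ l, l ≤ N → ∑ m ∈ Finset.range (N + 1), B l m = B l l := by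
    intro l hl
    rw [Finset.sum_eq_single l]
    · intro m hm hne
      rw [hB l m hl (Nat.lt_succ_iff.mp (Finset.mem_range.mp hm))]
      simp [Ne.symm hne]
    · intro h; exact absurd (Finset.mem_range.mpr (Nat.lt_succ_of_le hl)) h
  have hSrow : ∀ l, l ≤ N → ∑ m ∈ Finset.range (N + 1), S l m = -B l l := by
    intro l hl
    have h : ∑ m ∈ Finset.range (N + 1), S l m
        = ∑ m ∈ Finset.range (N + 1), (2 * Q l m - B l m) := by
      refine Finset.sum_congr rfl fun m hm => ?_
      exact hS l m hl (Nat.lt_succ_iff.mp (Finset.mem_range.mp hm))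
    rw [h, Finset.sum_sub_distrib, ← Finset.mul_sum, hQrow l hl, hBrow l hl]
    ring
  have hScol : ∀ m, m ≤ N → ∑ l ∈ Finset.range (N + 1), S l m = B m m := by
    intro m hm
    have h : ∑ l ∈ Finset.range (N + 1), S l m
        = ∑ l ∈ Finset.range (N + 1), -S m l := by
      refine Finset.sum_congr rfl fun l hl => ?_
      exact hskew l m (Nat.lt_succ_iff.mp (Finset.mem_range.mp hl)) hm
    rw [h, Finset.sum_neg_distrib, hSrow m hm, neg_neg]
  have hBd : ∀ l, l ≤ N → B l l = (if l = N then (1:ℝ) else 0) - (if l = 0 then 1 else 0) := by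
    intro l hl
    rw [hB l l hl hl]
    by_cases h0 : l = 0
    · subst h0
      simp [show ¬ ((0:ℕ) = N) by omega]
    · by_cases hNN : l = N
      · subst hNN
        simp [h0]
      · simp [h0, hNN]
  intro j hj
  funext i
  have hΓ' : ∀ j' k, j' ≤ N → k ≤ N → (k = j' + 1 ∨ j' = k + 1) →
      Γ j' k i = (∑ l ∈ Finset.range (min j' k + 1),
          ∑ m ∈ Finset.range (N + 1), S l m * f l m i)
        + Φloc j' i * (∑ l ∈ Finset.range (min j' k + 1),
            ∑ m ∈ Finset.range (N + 1), S l m * (r m i - r l i))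
        + 2 * (Φloc j' i * (r 0 i - r j' i)) := by
    intro j' k h1 h2 h3
    have h := congrFun (hΓ j' k h1 h2 h3) i
    simpa using h
  have hBdsum : ∀ c : ℕ → ℝ, ∑ l ∈ Finset.range (N + 1), B l l * c l = c N - c 0 := by
    intro c
    have h : ∀ l ∈ Finset.range (N + 1), B l l * c l
        = (if l = N then c l else 0) - (if l = 0 then c l else 0) := by
      intro l hl
      rw [hBd l (Nat.lt_succ_iff.mp (Finset.mem_range.mp hl))]
      have hN0 : ¬ (N = 0) := by omega
      have h0N : ¬ ((0:ℕ) = N) := by omega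
      by_cases h1 : l = N <;> by_cases h2 : l = 0
      · exfalso; omega
      · simp [h1, h2, hN0]
      · simp [h1, h2, h0N]
      · simp [h1, h2]
    rw [Finset.sum_congr rfl h, Finset.sum_sub_distrib]
    rw [Finset.sum_ite_eq' (Finset.range (N + 1)) N c,
        Finset.sum_ite_eq' (Finset.range (N + 1)) 0 c]
    simp [Finset.mem_range, Nat.lt_succ_iff, hN]
  -- zero lemma 1
  have Z1 : (∑ l ∈ Finset.range (N + 1), ∑ m ∈ Finset.range (N + 1), S l m * f l m i) = 0 := by
    have h : (∑ l ∈ Finset.range (N + 1), ∑ m ∈ Finset.range (N + 1), S l m * f l m i)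
        = -(∑ l ∈ Finset.range (N + 1), ∑ m ∈ Finset.range (N + 1), S l m * f l m i) := by
      calc (∑ l ∈ Finset.range (N + 1), ∑ m ∈ Finset.range (N + 1), S l m * f l m i)
          = ∑ m ∈ Finset.range (N + 1), ∑ l ∈ Finset.range (N + 1), S l m * f l m i :=
            Finset.sum_comm
        _ = ∑ m ∈ Finset.range (N + 1), ∑ l ∈ Finset.range (N + 1), -(S m l * f m l i) := by
            refine Finset.sum_congr rfl fun m hm => Finset.sum_congr rfl fun l hl => ?_
            have hm' := Nat.lt_succ_iff.mp (Finset.mem_range.mp hm)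
            have hl' := Nat.lt_succ_iff.mp (Finset.mem_range.mp hl)
            rw [hskew l m hl' hm', congrFun (hf l m hl' hm') i]
            ring
        _ = -(∑ m ∈ Finset.range (N + 1), ∑ l ∈ Finset.range (N + 1), S m l * f m l i) := by
            simp [Finset.sum_neg_distrib]
    linarith
  -- zero lemma 2
  have Z2 : (∑ l ∈ Finset.range (N + 1), ∑ m ∈ Finset.range (N + 1), S l m * (r m i - r l i))
      = 2 * (r N i - r 0 i) := by
    have h1 : (∑ l ∈ Finset.range (N + 1), ∑ m ∈ Finset.range (N + 1), S l m * (r m i - r l i))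
        = (∑ l ∈ Finset.range (N + 1), ∑ m ∈ Finset.range (N + 1), S l m * r m i)
          + ∑ l ∈ Finset.range (N + 1), B l l * r l i := by
      rw [← Finset.sum_add_distrib]
      refine Finset.sum_congr rfl fun l hl => ?_
      have hl' := Nat.lt_succ_iff.mp (Finset.mem_range.mp hl)
      have : ∑ m ∈ Finset.range (N + 1), S l m * (r m i - r l i)
          = (∑ m ∈ Finset.range (N + 1), S l m * r m i)
            - (∑ m ∈ Finset.range (N + 1), S l m) * r l i := by
        rw [Finset.sum_mul, ← Finset.sum_sub_distrib]
        refine Finset.sum_congr rfl fun m hm => by ring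
      rw [this, hSrow l hl']
      ring
    have h2 : (∑ l ∈ Finset.range (N + 1), ∑ m ∈ Finset.range (N + 1), S l m * r m i)
        = ∑ m ∈ Finset.range (N + 1), B m m * r m i := by
      rw [Finset.sum_comm]
      refine Finset.sum_congr rfl fun m hm => ?_
      have hm' := Nat.lt_succ_iff.mp (Finset.mem_range.mp hm)
      rw [← Finset.sum_mul, hScol m hm']
    rw [h1, h2, hBdsum (fun l => r l i)]
    ring
  -- RHS componentwise
  simp only [Pi.sub_apply, Pi.add_apply, Pi.neg_apply, Pi.mul_apply, Pi.smul_apply,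
    Pi.zero_apply, smul_eq_mul, Finset.sum_apply, apply_ite (fun g : Fin d → ℝ => g i)]
  have hRHS : (∑ m ∈ Finset.range (N + 1), S j m * (f j m i + Φloc j i * (r m i - r j i)))
      = (∑ m ∈ Finset.range (N + 1), S j m * f j m i)
        + Φloc j i * ∑ m ∈ Finset.range (N + 1), S j m * (r m i - r j i) := by
    rw [Finset.mul_sum, ← Finset.sum_add_distrib]
    refine Finset.sum_congr rfl fun m hm => by ring
  by_cases hj0 : j = 0
  · subst hj0
    have hne : ¬ ((0:ℕ) = N) := by omega
    rw [if_pos rfl, if_pos rfl, if_neg hne, if_neg hne]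
    rw [hΓ' 0 1 (by omega) (by omega) (Or.inl rfl)]
    rw [hRHS]
    simp only [Nat.zero_min, Nat.zero_add, Finset.sum_range_one]
    ring
  · by_cases hjN : j = N
    · subst hjN
      rw [if_neg hj0, if_pos rfl, if_neg hj0, if_pos rfl]
      rw [hΓ' j (j - 1) le_rfl (by omega) (Or.inr (by omega))]
      have hmin : min j (j - 1) = j - 1 := Nat.min_eq_right (Nat.sub_le j 1)
      have hsucc : j - 1 + 1 = j := by omega
      rw [hmin, hsucc]
      have hA : (∑ l ∈ Finset.range j, ∑ m ∈ Finset.range (j + 1), S l m * f l m i)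
          = -(∑ m ∈ Finset.range (j + 1), S j m * f j m i) := by
        have h := Finset.sum_range_succ
          (fun l => ∑ m ∈ Finset.range (j + 1), S l m * f l m i) j
        rw [h] at Z1
        linarith
      have hC : (∑ l ∈ Finset.range j, ∑ m ∈ Finset.range (j + 1), S l m * (r m i - r l i))
          = 2 * (r j i - r 0 i) - ∑ m ∈ Finset.range (j + 1), S j m * (r m i - r j i) := by
        have h := Finset.sum_range_succ
          (fun l => ∑ m ∈ Finset.range (j + 1), S l m * (r m i - r l i)) j
        rw [h] at Z2
        linarith
      rw [hA, hC, hRHS]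
      ring
    · rw [if_neg hj0, if_neg hjN, if_neg hj0, if_neg hjN]
      rw [hΓ' j (j - 1) hj (by omega) (Or.inr (by omega)),
          hΓ' j (j + 1) hj (by omega) (Or.inl rfl)]
      have hmin1 : min j (j - 1) = j - 1 := Nat.min_eq_right (Nat.sub_le j 1)
      have hmin2 : min j (j + 1) = j := Nat.min_eq_left (by omega)
      have hsucc : j - 1 + 1 = j := by omega
      rw [hmin1, hmin2, hsucc]
      rw [Finset.sum_range_succ (fun l => ∑ m ∈ Finset.range (N + 1), S l m * f l m i) j,
          Finset.sum_range_succ (fun l => ∑ m ∈ Finset.range (N + 1), S l m * (r m i - r l i)) j,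
          hRHS]
      ring
end

section
/- Let N ≥ 1, d ≥ 1, let S be any (N+1)×(N+1) real matrix, and let Γ^DG be the staggered DG fluxes built from a two-point flux f, local factor Φloc, nodal quantity r and surface data g_L, g_R. Suppose the data are at equilibrium: f_{(l,m)} = 0 for all l, m, the quantity r is constant (r_l = r_m for all l, m), and g_L = g_R = 0. Then every staggered DG flux vanishes: Γ^DG_{(j,k)} = 0 for all adjacent pairs (j,k), including the boundary fluxes Γ^DG_{(0,−1)} and Γ^DG_{(N,N+1)}. Consequently, for any low-order fluxes Γ^FV defined on the same adjacent pairs with Γ^FV_{(j,k)} = 0 for all pairs, and for arbitrary blending coefficients α_{(j,k)} ∈ ℝ, the hybrid fluxes Γ_{(j,k)} := (1 − α_{(j,k)}) Γ^DG_{(j,k)} + α_{(j,k)} Γ^FV_{(j,k)} satisfy Γ_{(j,j−1)} − Γ_{(j,j+1)} = 0 for every node j ∈ {0,…,N}, so the hybrid scheme preserves the equilibrium exactly. -/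
/-- At equilibrium (`f ≡ 0`, `r` constant, `gL = gR = 0`), every staggered
DG flux vanishes (including the boundary fluxes `Γ^DG_{(0,−1)} = gL` and
`Γ^DG_{(N,N+1)} = gR`). Consequently, for any low-order fluxes `Γ^FV` vanishing on the same
adjacent pairs (and boundary values) and arbitrary blending coefficients `α`, the hybrid
fluxes `Γ = (1−α) Γ^DG + α Γ^FV` satisfy `Γ_{(j,j−1)} − Γ_{(j,j+1)} = 0` for every node `j`,
so the hybrid scheme preserves the equilibrium exactly. -/
theorem stmt_4 (N d : ℕ) (hN : 1 ≤ N) (hd : 1 ≤ d)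
    (S : ℕ → ℕ → ℝ)
    (f : ℕ → ℕ → Fin d → ℝ)
    (Φloc r : ℕ → Fin d → ℝ)
    (gL gR : Fin d → ℝ)
    (Γdg : ℕ → ℕ → Fin d → ℝ)
    (hΓ : ∀ j k, j ≤ N → k ≤ N → (k = j + 1 ∨ j = k + 1) →
      Γdg j k =
        (∑ l ∈ Finset.range (min j k + 1), ∑ m ∈ Finset.range (N + 1), S l m • f l m)
          + Φloc j * (∑ l ∈ Finset.range (min j k + 1), ∑ m ∈ Finset.range (N + 1),
              S l m • (r m - r l))
          + (2 : ℝ) • (Φloc j * (r 0 - r j)))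
    (hfzero : ∀ l m, l ≤ N → m ≤ N → f l m = 0)
    (hrconst : ∀ l m, l ≤ N → m ≤ N → r l = r m)
    (hgL : gL = 0) (hgR : gR = 0) :
    (∀ j k, j ≤ N → k ≤ N → (k = j + 1 ∨ j = k + 1) → Γdg j k = 0) ∧
    gL = 0 ∧ gR = 0 ∧
    (∀ (ΓFV : ℕ → ℕ → Fin d → ℝ) (ΓFVL ΓFVR : Fin d → ℝ),
      (∀ j k, j ≤ N → k ≤ N → (k = j + 1 ∨ j = k + 1) → ΓFV j k = 0) →
      ΓFVL = 0 → ΓFVR = 0 →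
      ∀ (α : ℕ → ℕ → ℝ) (αL αR : ℝ),
        ∀ j, j ≤ N →
          ((if j = 0 then (1 - αL) • gL + αL • ΓFVL
              else (1 - α j (j - 1)) • Γdg j (j - 1) + α j (j - 1) • ΓFV j (j - 1))
            - (if j = N then (1 - αR) • gR + αR • ΓFVR
              else (1 - α j (j + 1)) • Γdg j (j + 1) + α j (j + 1) • ΓFV j (j + 1))) = 0) := by
  have hdg : ∀ j k, j ≤ N → k ≤ N → (k = j + 1 ∨ j = k + 1) → Γdg j k = 0 := by
    intro j k hj hk hadj
    rw [hΓ j k hj hk hadj]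
    have h1 : (∑ l ∈ Finset.range (min j k + 1), ∑ m ∈ Finset.range (N + 1),
        S l m • f l m) = 0 := by
      apply Finset.sum_eq_zero; intro l hl
      apply Finset.sum_eq_zero; intro m hm
      simp only [Finset.mem_range] at hl hm
      rw [hfzero l m (by omega) (by omega)]
      simp
    have h2 : (∑ l ∈ Finset.range (min j k + 1), ∑ m ∈ Finset.range (N + 1),
        S l m • (r m - r l)) = 0 := by
      apply Finset.sum_eq_zero; intro l hl
      apply Finset.sum_eq_zero; intro m hm
      simp only [Finset.mem_range] at hl hm
      rw [hrconst m l (by omega) (by omega)]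
      simp
    have h3 : r 0 - r j = 0 := by
      rw [hrconst 0 j (by omega) hj]; simp
    rw [h1, h2, h3]
    simp
  refine ⟨hdg, hgL, hgR, ?_⟩
  intro ΓFV ΓFVL ΓFVR hFV hFVL hFVR α αL αR j hj
  have hA : (if j = 0 then (1 - αL) • gL + αL • ΓFVL
      else (1 - α j (j - 1)) • Γdg j (j - 1) + α j (j - 1) • ΓFV j (j - 1)) = 0 := by
    split
    · rw [hgL, hFVL]; simp
    · rw [hdg j (j - 1) hj (by omega) (by omega), hFV j (j - 1) hj (by omega) (by omega)]
      simp
  have hB : (if j = N then (1 - αR) • gR + αR • ΓFVR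
      else (1 - α j (j + 1)) • Γdg j (j + 1) + α j (j + 1) • ΓFV j (j + 1)) = 0 := by
    split
    · rw [hgR, hFVR]; simp
    · rw [hdg j (j + 1) hj (by omega) (by omega), hFV j (j + 1) hj (by omega) (by omega)]
      simp
  rw [hA, hB]; simp
end

section
/- Let N ≥ 1, d ≥ 1, let Q be an (N+1)×(N+1) real matrix satisfying the SBP assumptions with boundary matrix B, set S := 2Q − B, and let f be a symmetric two-point flux, Φloc a local factor, r a nodal quantity, and g_L, g_R surface data. Define the alternative staggered fluxes by Γ^a_{(0,−1)} := g_L, Γ^a_{(N,N+1)} := g_R, Γ^a_{(N,N−1)} := ∑_{l=0}^{N−1} ∑_{m=0}^N S_{lm} f_{(l,m)} + Φloc_N ∘ ∑_{l=0}^{N−1} ∑_{m=0}^N S_{lm} (r_m − r_l) + 2 Φloc_N ∘ (r_0 − r_N), and for all other adjacent pairs (j,k) with k = j±1: Γ^a_{(j,k)} := ∑_{l=0}^{min(j,k)} ∑_{m=0}^N S_{lm} f_{(l,m)} + Φloc_j ∘ ∑_{l=0}^{min(j,k)} ∑_{m=0}^N S_{lm} (r_m − r_l). Then for every node j ∈ {0,…,N}: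 Γ^a_{(j,j−1)} − Γ^a_{(j,j+1)} = −∑_{m=0}^N S_{jm} ( f_{(j,m)} + Φloc_j ∘ (r_m − r_j) ) + δ_{j0} g_L − δ_{jN} g_R, i.e. the alternative staggered fluxes also recover the DGSEM residual at every node. -/
/-- The alternative staggered fluxes `Γ^a` (with the correction term
`2 Φloc_N ∘ (r_0 − r_N)` placed only in `Γ^a_{(N,N−1)}`, and no correction term in the other
interior staggered fluxes) also recover the DGSEM residual at every node:
`Γ^a_{(j,j−1)} − Γ^a_{(j,j+1)} = −∑_m S_{jm} (f_{(j,m)} + Φloc_j ∘ (r_m − r_j)) + δ_{j0} gL − δ_{jN} gR`. -/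
theorem stmt_5 (N d : ℕ) (hN : 1 ≤ N) (hd : 1 ≤ d)
    (Q B S : ℕ → ℕ → ℝ)
    (hB : ∀ j k, j ≤ N → k ≤ N →
      B j k = if j = k then (if j = 0 then (-1 : ℝ) else if j = N then 1 else 0) else 0)
    (hQB : ∀ j k, j ≤ N → k ≤ N → Q j k + Q k j = B j k)
    (hQrow : ∀ j, j ≤ N → ∑ k ∈ Finset.range (N + 1), Q j k = 0)
    (hS : ∀ j k, j ≤ N → k ≤ N → S j k = 2 * Q j k - B j k)
    (f : ℕ → ℕ → Fin d → ℝ)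
    (hf : ∀ j k, j ≤ N → k ≤ N → f j k = f k j)
    (Φloc r : ℕ → Fin d → ℝ)
    (gL gR : Fin d → ℝ)
    (Γa : ℕ → ℕ → Fin d → ℝ)
    (hΓa : ∀ j k, j ≤ N → k ≤ N → (k = j + 1 ∨ j = k + 1) → ¬(j = N ∧ k = N - 1) →
      Γa j k =
        (∑ l ∈ Finset.range (min j k + 1), ∑ m ∈ Finset.range (N + 1), S l m • f l m)
          + Φloc j * (∑ l ∈ Finset.range (min j k + 1), ∑ m ∈ Finset.range (N + 1),
              S l m • (r m - r l)))
    (hΓaN : Γa N (N - 1) =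
        (∑ l ∈ Finset.range N, ∑ m ∈ Finset.range (N + 1), S l m • f l m)
          + Φloc N * (∑ l ∈ Finset.range N, ∑ m ∈ Finset.range (N + 1),
              S l m • (r m - r l))
          + (2 : ℝ) • (Φloc N * (r 0 - r N))) :
    ∀ j, j ≤ N →
      (if j = 0 then gL else Γa j (j - 1)) - (if j = N then gR else Γa j (j + 1)) =
        -(∑ m ∈ Finset.range (N + 1), S j m • (f j m + Φloc j * (r m - r j)))
          + (if j = 0 then gL else 0) - (if j = N then gR else 0) := by
  -- basic properties of S
  have hSskew : ∀ j k, j ≤ N → k ≤ N → S k j = - S j k := by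
    intro j k hj hk
    have hBsymm : B k j = B j k := by
      rw [hB k j hk hj, hB j k hj hk]
      by_cases h : j = k <;> simp [h, eq_comm]
    have := hQB j k hj hk
    rw [hS k j hk hj, hS j k hj hk, hBsymm]
    linarith
  have hSrow : ∀ j, j ≤ N → ∑ k ∈ Finset.range (N + 1), S j k
      = if j = 0 then 1 else if j = N then -1 else 0 := by
    intro j hj
    have h1 : ∑ k ∈ Finset.range (N + 1), S j k
        = 2 * (∑ k ∈ Finset.range (N + 1), Q j k) - ∑ k ∈ Finset.range (N + 1), B j k := by
      rw [Finset.mul_sum, ← Finset.sum_sub_distrib]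
      refine Finset.sum_congr rfl ?_
      intro k hk
      exact hS j k hj (Nat.lt_succ_iff.mp (Finset.mem_range.mp hk))
    have h2 : ∑ k ∈ Finset.range (N + 1), B j k
        = if j = 0 then (-1 : ℝ) else if j = N then 1 else 0 := by
      have : ∀ k ∈ Finset.range (N + 1), B j k
          = if k = j then (if j = 0 then (-1 : ℝ) else if j = N then 1 else 0) else 0 := by
        intro k hk
        rw [hB j k hj (Nat.lt_succ_iff.mp (Finset.mem_range.mp hk))]
        by_cases h : j = k <;> simp [h, eq_comm]
      rw [Finset.sum_congr rfl this, Finset.sum_ite_eq' (Finset.range (N + 1))]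
      simp [Nat.lt_succ_iff, hj]
    rw [h1, hQrow j hj, h2]
    split_ifs <;> norm_num
  intro j hj
  by_cases h0 : j = 0
  · -- left boundary
    subst h0
    have hN0 : (0 : ℕ) ≠ N := fun h => by omega
    rw [if_pos rfl, if_neg hN0, if_pos rfl, if_neg hN0]
    rw [hΓa 0 1 (by omega) hN (Or.inl rfl) (by omega)]
    funext x
    simp only [Pi.sub_apply, Pi.add_apply, Pi.mul_apply, Pi.neg_apply, Pi.zero_apply,
      Finset.sum_apply, Pi.smul_apply, smul_eq_mul, Nat.zero_min, zero_add,
      Finset.sum_range_one, mul_add, Finset.sum_add_distrib, Finset.mul_sum]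
    ring_nf
    refine congrArg₂ _ rfl (congrArg₂ _ rfl ?_)
    exact funext fun m => by ring
  · by_cases hn : j = N
    · -- right boundary
      subst hn
      rw [if_neg h0, if_pos rfl, if_neg h0, if_pos rfl, hΓaN]
      have hskewf : ∀ x : Fin d,
          ∑ l ∈ Finset.range (j + 1), ∑ m ∈ Finset.range (j + 1), S l m * f l m x = 0 := by
        intro x
        have hT : (∑ l ∈ Finset.range (j + 1), ∑ m ∈ Finset.range (j + 1), S l m * f l m x)
            = -(∑ l ∈ Finset.range (j + 1), ∑ m ∈ Finset.range (j + 1), S l m * f l m x) := by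
          nth_rewrite 1 [Finset.sum_comm]
          rw [← Finset.sum_neg_distrib]
          refine Finset.sum_congr rfl ?_
          intro l hl
          rw [← Finset.sum_neg_distrib]
          refine Finset.sum_congr rfl ?_
          intro m hm
          have hl' := Nat.lt_succ_iff.mp (Finset.mem_range.mp hl)
          have hm' := Nat.lt_succ_iff.mp (Finset.mem_range.mp hm)
          rw [hSskew l m hl' hm', hf m l hm' hl']
          ring
        linarith
      have hskewr : ∀ x : Fin d,
          ∑ l ∈ Finset.range (j + 1), ∑ m ∈ Finset.range (j + 1), S l m * (r m x - r l x)
            = 2 * (r j x - r 0 x) := by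
        intro x
        have hsplit : ∑ l ∈ Finset.range (j + 1), ∑ m ∈ Finset.range (j + 1),
              S l m * (r m x - r l x)
            = (∑ l ∈ Finset.range (j + 1), ∑ m ∈ Finset.range (j + 1), S l m * r m x)
              - (∑ l ∈ Finset.range (j + 1), (∑ m ∈ Finset.range (j + 1), S l m) * r l x) := by
          rw [← Finset.sum_sub_distrib]
          refine Finset.sum_congr rfl ?_
          intro l hl
          rw [Finset.sum_mul, ← Finset.sum_sub_distrib]
          refine Finset.sum_congr rfl ?_
          intro m hm; ring
        have hfirst : (∑ l ∈ Finset.range (j + 1), ∑ m ∈ Finset.range (j + 1), S l m * r m x)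
            = -(∑ l ∈ Finset.range (j + 1), (∑ m ∈ Finset.range (j + 1), S l m) * r l x) := by
          rw [Finset.sum_comm, ← Finset.sum_neg_distrib]
          refine Finset.sum_congr rfl ?_
          intro m hm
          rw [Finset.sum_mul, ← Finset.sum_neg_distrib]
          refine Finset.sum_congr rfl ?_
          intro l hl
          have hl' := Nat.lt_succ_iff.mp (Finset.mem_range.mp hl)
          have hm' := Nat.lt_succ_iff.mp (Finset.mem_range.mp hm)
          rw [hSskew m l hm' hl']
          ring
        have hsecond : (∑ l ∈ Finset.range (j + 1), (∑ m ∈ Finset.range (j + 1), S l m) * r l x)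
            = r 0 x - r j x := by
          have : ∀ l ∈ Finset.range (j + 1), (∑ m ∈ Finset.range (j + 1), S l m) * r l x
              = (if l = 0 then r l x else 0) + (if l = j then -(r l x) else 0) := by
            intro l hl
            rw [hSrow l (Nat.lt_succ_iff.mp (Finset.mem_range.mp hl))]
            by_cases e0 : l = 0 <;> by_cases en : l = j <;>
              simp [e0, en, h0, eq_comm] <;> first | ring | omega
          rw [Finset.sum_congr rfl this, Finset.sum_add_distrib]
          rw [Finset.sum_ite_eq' (Finset.range (j + 1)) 0 (fun l => r l x),
            Finset.sum_ite_eq' (Finset.range (j + 1)) j (fun l => -(r l x))]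
          rw [if_pos (Finset.mem_range.mpr (Nat.succ_pos j)),
            if_pos (Finset.mem_range.mpr (Nat.lt_succ_self j))]
          ring
        rw [hsplit, hfirst, hsecond]; ring
      funext x
      have hfn := hskewf x
      have hrn := hskewr x
      rw [Finset.sum_range_succ] at hfn hrn
      simp only [Pi.sub_apply, Pi.add_apply, Pi.mul_apply, Pi.neg_apply, Pi.zero_apply,
        Finset.sum_apply, Pi.smul_apply, smul_eq_mul]
      have hF : ∑ l ∈ Finset.range j, ∑ m ∈ Finset.range (j + 1), S l m * f l m x
          = -(∑ m ∈ Finset.range (j + 1), S j m * f j m x) := by linarith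
      have hR : ∑ l ∈ Finset.range j, ∑ m ∈ Finset.range (j + 1), S l m * (r m x - r l x)
          = 2 * (r j x - r 0 x) - ∑ m ∈ Finset.range (j + 1), S j m * (r m x - r j x) := by
        linarith
      rw [hF, hR]
      simp only [mul_sub, mul_add, Finset.sum_add_distrib, Finset.mul_sum]
      have hc : ∀ m ∈ Finset.range (j + 1),
          Φloc j x * (S j m * r m x) - Φloc j x * (S j m * r j x)
            = S j m * (Φloc j x * r m x) - S j m * (Φloc j x * r j x) :=
        fun m _ => by ring
      rw [Finset.sum_congr rfl hc]
      ring
    · -- interior node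
      have hj1 : 1 ≤ j := Nat.one_le_iff_ne_zero.mpr h0
      have hjm : j - 1 ≤ N := by omega
      have hjp : j + 1 ≤ N := by omega
      rw [if_neg h0, if_neg hn, if_neg h0, if_neg hn]
      rw [hΓa j (j - 1) hj hjm (Or.inr (by omega)) (by omega),
        hΓa j (j + 1) hj hjp (Or.inl rfl) (by omega)]
      have hmin1 : min j (j - 1) + 1 = j := by omega
      have hmin2 : min j (j + 1) = j := by omega
      rw [hmin1, hmin2]
      have e1 : (∑ l ∈ Finset.range (j + 1), ∑ m ∈ Finset.range (N + 1), S l m • f l m)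
          = (∑ l ∈ Finset.range j, ∑ m ∈ Finset.range (N + 1), S l m • f l m)
            + ∑ m ∈ Finset.range (N + 1), S j m • f j m :=
        Finset.sum_range_succ _ _
      have e2 : (∑ l ∈ Finset.range (j + 1), ∑ m ∈ Finset.range (N + 1), S l m • (r m - r l))
          = (∑ l ∈ Finset.range j, ∑ m ∈ Finset.range (N + 1), S l m • (r m - r l))
            + ∑ m ∈ Finset.range (N + 1), S j m • (r m - r j) :=
        Finset.sum_range_succ _ _
      rw [e1, e2]
      funext x
      simp only [Pi.sub_apply, Pi.add_apply, Pi.mul_apply, Pi.neg_apply, Pi.zero_apply,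
        Finset.sum_apply, Pi.smul_apply, smul_eq_mul]
      simp only [mul_add, Finset.sum_add_distrib, Finset.mul_sum]
      have hc : ∀ m ∈ Finset.range (N + 1),
          Φloc j x * (S j m * (r m x - r j x)) = S j m * (Φloc j x * (r m x - r j x)) :=
        fun m _ => by ring
      rw [Finset.sum_congr rfl hc]
      ring
end

section
/- Let N ≥ 1, d ≥ 1, let Q be an (N+1)×(N+1) real matrix satisfying the SBP assumptions with boundary matrix B, set S := 2Q − B, and assume in addition that S is skew-centrosymmetric, i.e. S_{jk} = −S_{N−j,N−k} for all j, k ∈ {0,…,N}. Let f be a symmetric two-point flux, Φloc a local factor and r a nodal quantity, with staggered DG fluxes Γ as defined. Define the right-to-left (reversed-indexing) staggered fluxes for adjacent pairs (i,q) with q = i±1, 0 ≤ i,q ≤ N, by Γ^rev_{(i,q)} := −( ∑_{p=0}^{min(i,q)} ∑_{n=0}^N S_{pn} f_{(N−p,N−n)} + Φloc_{N−i} ∘ ∑_{p=0}^{min(i,q)} ∑_{n=0}^N S_{pn} (r_{N−n} − r_{N−p}) + 2 Φloc_{N−i} ∘ (r_N − r_{N−i}) ). Then the staggered fluxes are invariant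 under index relabeling: for every adjacent pair (j,k) with k = j±1 and 0 ≤ j,k ≤ N, one has Γ^rev_{(N−j,N−k)} = −Γ_{(j,k)}. -/
lemma sum_range_reflect' {M : Type*} [AddCommMonoid M] (h : ℕ → M) (N : ℕ) :
    ∑ n ∈ Finset.range (N + 1), h (N - n) = ∑ n ∈ Finset.range (N + 1), h n := by
  have := Finset.sum_range_reflect h (N + 1)
  simpa using this

lemma refl_sum {M : Type*} [AddCommMonoid M] (F : ℕ → M) (N K : ℕ) (hK : K ≤ N) :
    ∑ p ∈ Finset.range (K + 1), F (N - p) = ∑ l ∈ Finset.Ico (N - K) (N + 1), F l := by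
  refine Finset.sum_nbij' (fun p => N - p) (fun l => N - l) ?_ ?_ ?_ ?_ ?_
  · intro a ha; simp only [Finset.mem_range, Finset.mem_Ico] at *; omega
  · intro a ha; simp only [Finset.mem_range, Finset.mem_Ico] at *; omega
  · intro a ha; simp only [Finset.mem_range] at ha; show N - (N - a) = a; omega
  · intro a ha; simp only [Finset.mem_Ico] at ha; show N - (N - a) = a; omega
  · intro a ha; rfl

/-- Invariance of the staggered DG fluxes under index relabeling: if `S`
(built from an SBP matrix `Q` as `S := 2Q − B`) is in addition skew-centrosymmetric,
`S_{jk} = −S_{N−j,N−k}`, then the reversed-indexing staggered fluxes satisfy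
`Γ^rev_{(N−j,N−k)} = −Γ_{(j,k)}` for every adjacent pair `(j,k)`. -/
theorem stmt_6 (N d : ℕ) (hN : 1 ≤ N) (hd : 1 ≤ d)
    (Q B S : ℕ → ℕ → ℝ)
    (hB : ∀ j k, j ≤ N → k ≤ N →
      B j k = if j = k then (if j = 0 then (-1 : ℝ) else if j = N then 1 else 0) else 0)
    (hQB : ∀ j k, j ≤ N → k ≤ N → Q j k + Q k j = B j k)
    (hQrow : ∀ j, j ≤ N → ∑ k ∈ Finset.range (N + 1), Q j k = 0)
    (hS : ∀ j k, j ≤ N → k ≤ N → S j k = 2 * Q j k - B j k)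
    (hcentro : ∀ j k, j ≤ N → k ≤ N → S j k = -S (N - j) (N - k))
    (f : ℕ → ℕ → Fin d → ℝ)
    (hf : ∀ j k, j ≤ N → k ≤ N → f j k = f k j)
    (Φloc r : ℕ → Fin d → ℝ)
    (Γ : ℕ → ℕ → Fin d → ℝ)
    (hΓ : ∀ j k, j ≤ N → k ≤ N → (k = j + 1 ∨ j = k + 1) →
      Γ j k =
        (∑ l ∈ Finset.range (min j k + 1), ∑ m ∈ Finset.range (N + 1), S l m • f l m)
          + Φloc j * (∑ l ∈ Finset.range (min j k + 1), ∑ m ∈ Finset.range (N + 1),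
              S l m • (r m - r l))
          + (2 : ℝ) • (Φloc j * (r 0 - r j)))
    (Γrev : ℕ → ℕ → Fin d → ℝ)
    (hΓrev : ∀ i q, i ≤ N → q ≤ N → (q = i + 1 ∨ i = q + 1) →
      Γrev i q =
        -((∑ p ∈ Finset.range (min i q + 1), ∑ n ∈ Finset.range (N + 1),
              S p n • f (N - p) (N - n))
          + Φloc (N - i) * (∑ p ∈ Finset.range (min i q + 1), ∑ n ∈ Finset.range (N + 1),
              S p n • (r (N - n) - r (N - p)))
          + (2 : ℝ) • (Φloc (N - i) * (r N - r (N - i))))) :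
    ∀ j k, j ≤ N → k ≤ N → (k = j + 1 ∨ j = k + 1) →
      Γrev (N - j) (N - k) = -Γ j k := by
  intro j k hj hk hadj
  have hmx1 : max j k = min j k + 1 := by omega
  have hmxN : max j k ≤ N := by omega
  have e1 : N - (N - j) = j := by omega
  have e2 : min (N - j) (N - k) = N - max j k := by omega
  rw [hΓrev (N - j) (N - k) (by omega) (by omega) (by omega),
      hΓ j k hj hk hadj, e1, e2]
  -- basic S facts
  have hSskew : ∀ l m, l ≤ N → m ≤ N → S m l = -S l m := by
    intro l m hl hm
    have hBsym : B m l = B l m := by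
      rw [hB l m hl hm, hB m l hm hl]
      rcases eq_or_ne l m with h | h
      · simp [h]
      · simp [h, Ne.symm h]
    have h1 := hS l m hl hm
    have h2 := hS m l hm hl
    have h3 := hQB l m hl hm
    rw [hBsym] at h2
    linarith
  have hSrow : ∀ l, l ≤ N → ∑ m ∈ Finset.range (N + 1), S l m = -B l l := by
    intro l hl
    have h1 : ∑ m ∈ Finset.range (N + 1), S l m
        = ∑ m ∈ Finset.range (N + 1), (2 * Q l m - B l m) :=
      Finset.sum_congr rfl fun m hm => hS l m hl (by simpa [Nat.lt_succ_iff] using hm)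
    rw [h1, Finset.sum_sub_distrib, ← Finset.mul_sum, hQrow l hl, mul_zero, zero_sub]
    congr 1
    have h2 : ∑ m ∈ Finset.range (N + 1), B l m
        = ∑ m ∈ Finset.range (N + 1), (if l = m then B l l else 0) := by
      refine Finset.sum_congr rfl fun m hm => ?_
      rcases eq_or_ne l m with h | h
      · simp [h]
      · simp [h, hB l m hl (by simpa [Nat.lt_succ_iff] using hm)]
    rw [h2, Finset.sum_ite_eq]
    simp [Nat.lt_succ_iff, hl]
  have hScol : ∀ m, m ≤ N → ∑ l ∈ Finset.range (N + 1), S l m = B m m := by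
    intro m hm
    have h1 : ∑ l ∈ Finset.range (N + 1), S l m
        = ∑ l ∈ Finset.range (N + 1), -(S m l) :=
      Finset.sum_congr rfl fun l hl => hSskew m l hm (by simpa [Nat.lt_succ_iff] using hl)
    rw [h1, Finset.sum_neg_distrib, hSrow m hm, neg_neg]
  funext x
  simp only [Pi.neg_apply, Pi.add_apply, Pi.mul_apply, Pi.smul_apply, Pi.sub_apply,
    Finset.sum_apply, smul_eq_mul]
  -- full-sum identities (pointwise)
  have hzero : ∑ l ∈ Finset.range (N + 1), ∑ m ∈ Finset.range (N + 1), S l m * f l m x = 0 := by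
    have h2T : (∑ l ∈ Finset.range (N + 1), ∑ m ∈ Finset.range (N + 1), S l m * f l m x)
        + (∑ l ∈ Finset.range (N + 1), ∑ m ∈ Finset.range (N + 1), S l m * f l m x) = 0 := by
      nth_rewrite 2 [Finset.sum_comm]
      rw [← Finset.sum_add_distrib]
      refine Finset.sum_eq_zero fun l hl => ?_
      rw [← Finset.sum_add_distrib]
      refine Finset.sum_eq_zero fun m hm => ?_
      have hl' : l ≤ N := by simpa [Nat.lt_succ_iff] using hl
      have hm' : m ≤ N := by simpa [Nat.lt_succ_iff] using hm
      rw [hSskew l m hl' hm', ← hf l m hl' hm']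
      ring
    linarith
  have hdiag1 : ∑ l ∈ Finset.range (N + 1), (-B l l) * r l x = r 0 x - r N x := by
    have h1 : ∀ l ∈ Finset.range (N + 1), (-B l l) * r l x
        = (if l = 0 then r 0 x else 0) + (if l = N then -(r N x) else 0) := by
      intro l hl
      have hl' : l ≤ N := by simpa [Nat.lt_succ_iff] using hl
      rw [hB l l hl' hl']
      rcases eq_or_ne l 0 with h0 | h0
      · subst h0
        have : N ≠ 0 := by omega
        simp [this.symm]
      · rcases eq_or_ne l N with hN' | hN'
        · subst hN'; simp [h0]
        · simp [h0, hN']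
    rw [Finset.sum_congr rfl h1, Finset.sum_add_distrib]
    simp [Finset.sum_ite_eq', Nat.lt_succ_iff, sub_eq_add_neg]
  have hdiag2 : ∑ m ∈ Finset.range (N + 1), (B m m) * r m x = r N x - r 0 x := by
    have h1 : ∀ m ∈ Finset.range (N + 1), (B m m) * r m x
        = (if m = 0 then -(r 0 x) else 0) + (if m = N then r N x else 0) := by
      intro m hm
      have hm' : m ≤ N := by simpa [Nat.lt_succ_iff] using hm
      rw [hB m m hm' hm']
      rcases eq_or_ne m 0 with h0 | h0
      · subst h0
        have : N ≠ 0 := by omega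
        simp [this.symm]
      · rcases eq_or_ne m N with hN' | hN'
        · subst hN'; simp [h0]
        · simp [h0, hN']
    rw [Finset.sum_congr rfl h1, Finset.sum_add_distrib]
    simp only [Finset.sum_ite_eq', Finset.mem_range, Nat.lt_succ_iff, hN, Nat.zero_le, le_refl,
      if_true]
    ring
  have hT : ∑ l ∈ Finset.range (N + 1), ∑ m ∈ Finset.range (N + 1), S l m * (r m x - r l x)
      = 2 * (r N x - r 0 x) := by
    have h1 : ∑ l ∈ Finset.range (N + 1), ∑ m ∈ Finset.range (N + 1), S l m * (r m x - r l x)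
        = (∑ l ∈ Finset.range (N + 1), ∑ m ∈ Finset.range (N + 1), S l m * r m x)
          - ∑ l ∈ Finset.range (N + 1), ∑ m ∈ Finset.range (N + 1), S l m * r l x := by
      simp only [mul_sub, Finset.sum_sub_distrib]
    have h2 : ∑ l ∈ Finset.range (N + 1), ∑ m ∈ Finset.range (N + 1), S l m * r m x
        = r N x - r 0 x := by
      rw [Finset.sum_comm]
      have : ∀ m ∈ Finset.range (N + 1),
          (∑ l ∈ Finset.range (N + 1), S l m * r m x) = (B m m) * r m x := by
        intro m hm
        rw [← Finset.sum_mul, hScol m (by simpa [Nat.lt_succ_iff] using hm)]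
      rw [Finset.sum_congr rfl this, hdiag2]
    have h3 : ∑ l ∈ Finset.range (N + 1), ∑ m ∈ Finset.range (N + 1), S l m * r l x
        = r 0 x - r N x := by
      have : ∀ l ∈ Finset.range (N + 1),
          (∑ m ∈ Finset.range (N + 1), S l m * r l x) = (-B l l) * r l x := by
        intro l hl
        rw [← Finset.sum_mul, hSrow l (by simpa [Nat.lt_succ_iff] using hl)]
      rw [Finset.sum_congr rfl this, hdiag1]
    rw [h1, h2, h3]; ring
  have hrange : Finset.range (min j k + 1) = Finset.Ico 0 (max j k) := by
    rw [Finset.range_eq_Ico, hmx1]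
  have e3 : N - (N - max j k) = max j k := by omega
  -- the f-part
  have hAf : (∑ p ∈ Finset.range (N - max j k + 1), ∑ n ∈ Finset.range (N + 1),
        S p n * f (N - p) (N - n) x)
      = ∑ l ∈ Finset.range (min j k + 1), ∑ m ∈ Finset.range (N + 1), S l m * f l m x := by
    have h1 : (∑ p ∈ Finset.range (N - max j k + 1), ∑ n ∈ Finset.range (N + 1),
          S p n * f (N - p) (N - n) x)
        = ∑ p ∈ Finset.range (N - max j k + 1),
            (-(∑ m ∈ Finset.range (N + 1), S (N - p) m * f (N - p) m x)) := by
      refine Finset.sum_congr rfl fun p hp => ?_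
      have hp' : p ≤ N := by simp only [Finset.mem_range] at hp; omega
      rw [← sum_range_reflect' (fun n => S (N - p) n * f (N - p) n x) N,
          ← Finset.sum_neg_distrib]
      refine Finset.sum_congr rfl fun n hn => ?_
      have hn' : n ≤ N := by simpa [Nat.lt_succ_iff] using hn
      rw [hcentro p n hp' hn']
      ring
    rw [h1, Finset.sum_neg_distrib,
        refl_sum (fun l => ∑ m ∈ Finset.range (N + 1), S l m * f l m x) N (N - max j k)
          (by omega), e3]
    have hsplit : (∑ l ∈ Finset.range (min j k + 1), ∑ m ∈ Finset.range (N + 1),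
          S l m * f l m x)
        + ∑ l ∈ Finset.Ico (max j k) (N + 1), ∑ m ∈ Finset.range (N + 1), S l m * f l m x
        = 0 := by
      rw [hrange, Finset.sum_Ico_consecutive _ (Nat.zero_le (max j k))
        (by omega : max j k ≤ N + 1), ← Finset.range_eq_Ico]
      exact hzero
    linarith
  -- the r-part
  have hAr : (∑ p ∈ Finset.range (N - max j k + 1), ∑ n ∈ Finset.range (N + 1),
        S p n * (r (N - n) x - r (N - p) x))
      = (∑ l ∈ Finset.range (min j k + 1), ∑ m ∈ Finset.range (N + 1),
          S l m * (r m x - r l x)) - 2 * (r N x - r 0 x) := by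
    have h1 : (∑ p ∈ Finset.range (N - max j k + 1), ∑ n ∈ Finset.range (N + 1),
          S p n * (r (N - n) x - r (N - p) x))
        = ∑ p ∈ Finset.range (N - max j k + 1),
            (-(∑ m ∈ Finset.range (N + 1), S (N - p) m * (r m x - r (N - p) x))) := by
      refine Finset.sum_congr rfl fun p hp => ?_
      have hp' : p ≤ N := by simp only [Finset.mem_range] at hp; omega
      rw [← sum_range_reflect' (fun n => S (N - p) n * (r n x - r (N - p) x)) N,
          ← Finset.sum_neg_distrib]
      refine Finset.sum_congr rfl fun n hn => ?_
      have hn' : n ≤ N := by simpa [Nat.lt_succ_iff] using hn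
      rw [hcentro p n hp' hn']
      ring
    rw [h1, Finset.sum_neg_distrib,
        refl_sum (fun l => ∑ m ∈ Finset.range (N + 1), S l m * (r m x - r l x)) N
          (N - max j k) (by omega), e3]
    have hsplit : (∑ l ∈ Finset.range (min j k + 1), ∑ m ∈ Finset.range (N + 1),
          S l m * (r m x - r l x))
        + ∑ l ∈ Finset.Ico (max j k) (N + 1), ∑ m ∈ Finset.range (N + 1),
            S l m * (r m x - r l x)
        = 2 * (r N x - r 0 x) := by
      rw [hrange, Finset.sum_Ico_consecutive _ (Nat.zero_le (max j k))
        (by omega : max j k ≤ N + 1), ← Finset.range_eq_Ico]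
      exact hT
    linarith
  rw [hAf, hAr]
  ring
end

section
/- Let d ≥ 1. Let v_i, v_m ∈ ℝ^d be entropy-variable vectors, F : {1,…,d} → ℝ² a block two-point flux, ψ_i, ψ_m ∈ ℝ² flux potentials, n_i, n_m ∈ ℝ² metric vectors with average n̄ := ½(n_i + n_m), P_i, P_m : {1,…,d} → ℝ² local non-conservative blocks, and φ ∈ ℝ a scalar jump term. Write w·P := ∑_{e=1}^d w_e P_e ∈ ℝ² and let ⋅ denote the Euclidean dot product on ℝ². Assume the generalized Tadmor (entropy-conservation) condition for the averaged-metric discretization: ∑_{e=1}^d (v_m − v_i)_e (F_e ⋅ n̄) − φ ((v_m · P_m) ⋅ n̄) − φ ((v_i · P_i) ⋅ n̄) − n̄ ⋅ (ψ_m − ψ_i) = 0. Then the entropy production of the modified local-metric discretization satisfies r := ∑_{e=1}^d (v_m − v_i)_e (F_e ⋅ n̄) − φ ((v_m · P_m) ⋅ n_m) − φ ((v_i · P_i) ⋅ n_i) − n̄ ⋅ (ψ_m − ψ_i) = −½ φ ( ((v_m · P_m) − (v_i · P_i)) ⋅ (n_m − n_i) ). In particular, if the metric vectors agree (n_i = n_m,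 as on parallelogram meshes), then r = 0, i.e. the modified scheme is entropy conservative. -/
open Matrix

/-- Entropy production of the modified local-metric discretization.
If the averaged-metric discretization satisfies the generalized Tadmor (entropy
conservation) condition, then replacing the averaged metric `n̄ = ½(n_i + n_m)` by the
local metrics `n_m, n_i` in the non-conservative contributions produces the entropy
residual `r = −½ φ ((v_m·P_m − v_i·P_i) ⋅ (n_m − n_i))`; in particular `r = 0` when
`n_i = n_m` (parallelogram meshes). Here `w·P := ∑_e w_e P_e ∈ ℝ²` and `⬝ᵥ` is the dot
product on `ℝ²`. -/
theorem stmt_14 (d : ℕ) (hd : 1 ≤ d)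
    (vi vm : Fin d → ℝ) (F : Fin d → Fin 2 → ℝ)
    (ψi ψm ni nm : Fin 2 → ℝ)
    (PI Pm : Fin d → Fin 2 → ℝ) (φ : ℝ)
    (htadmor :
      (∑ e, (vm e - vi e) * (F e ⬝ᵥ ((1 / 2 : ℝ) • (ni + nm))))
        - φ * ((∑ e, vm e • Pm e) ⬝ᵥ ((1 / 2 : ℝ) • (ni + nm)))
        - φ * ((∑ e, vi e • PI e) ⬝ᵥ ((1 / 2 : ℝ) • (ni + nm)))
        - ((1 / 2 : ℝ) • (ni + nm)) ⬝ᵥ (ψm - ψi) = 0) :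
    ((∑ e, (vm e - vi e) * (F e ⬝ᵥ ((1 / 2 : ℝ) • (ni + nm))))
        - φ * ((∑ e, vm e • Pm e) ⬝ᵥ nm)
        - φ * ((∑ e, vi e • PI e) ⬝ᵥ ni)
        - ((1 / 2 : ℝ) • (ni + nm)) ⬝ᵥ (ψm - ψi)
      = -(1 / 2 : ℝ) * φ * (((∑ e, vm e • Pm e) - (∑ e, vi e • PI e)) ⬝ᵥ (nm - ni))) ∧
    (ni = nm →
      (∑ e, (vm e - vi e) * (F e ⬝ᵥ ((1 / 2 : ℝ) • (ni + nm))))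
        - φ * ((∑ e, vm e • Pm e) ⬝ᵥ nm)
        - φ * ((∑ e, vi e • PI e) ⬝ᵥ ni)
        - ((1 / 2 : ℝ) • (ni + nm)) ⬝ᵥ (ψm - ψi) = 0) := by
  set S := ∑ e, (vm e - vi e) * (F e ⬝ᵥ ((1 / 2 : ℝ) • (ni + nm))) with hS
  set A := ∑ e, vm e • Pm e with hA
  set B := ∑ e, vi e • PI e with hB
  simp only [dotProduct, Fin.sum_univ_two, Pi.add_apply, Pi.smul_apply, Pi.sub_apply,
    smul_eq_mul] at htadmor ⊢
  constructor
  · linear_combination htadmor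
  · intro h
    rw [h] at htadmor ⊢
    linear_combination htadmor
end

section
/- Let g > 0, h̄ > 0 and v̄₁, v̄₂ ∈ ℝ. Then the 3×3 real matrix H := (1/g) · [[1, v̄₁, v̄₂], [v̄₁, g h̄ + v̄₁², v̄₁ v̄₂], [v̄₂, v̄₁ v̄₂, g h̄ + v̄₂²]] is symmetric positive definite. -/
open Matrix

/-- The discrete inverse Hessian of the total energy function for the 2D shallow water
equations, evaluated at averaged water height `h` and averaged velocities `v1, v2`. -/
noncomputable def shallowWaterHmat (g h v1 v2 : ℝ) : Matrix (Fin 3) (Fin 3) ℝ :=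
  (1 / g) • !![1, v1, v2;
               v1, g * h + v1 ^ 2, v1 * v2;
               v2, v1 * v2, g * h + v2 ^ 2]

/-- For `g > 0` and `h̄ > 0`, the matrix
`H = (1/g) [[1, v̄₁, v̄₂], [v̄₁, g h̄ + v̄₁², v̄₁ v̄₂], [v̄₂, v̄₁ v̄₂, g h̄ + v̄₂²]]`
is symmetric positive definite: `H = Hᵀ` and `xᵀ H x > 0` for every nonzero `x ∈ ℝ³`. -/
theorem stmt_15 (g h v1 v2 : ℝ) (hg : 0 < g) (hh : 0 < h) :
    (shallowWaterHmat g h v1 v2)ᵀ = shallowWaterHmat g h v1 v2 ∧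
    ∀ x : Fin 3 → ℝ, x ≠ 0 → 0 < x ⬝ᵥ (shallowWaterHmat g h v1 v2).mulVec x := by
  constructor
  · ext i j
    fin_cases i <;> fin_cases j <;>
      simp [shallowWaterHmat, Matrix.transpose_apply]
  · intro x hx
    have key : x ⬝ᵥ (shallowWaterHmat g h v1 v2).mulVec x =
        (1 / g) * ((x 0 + v1 * x 1 + v2 * x 2) ^ 2 + g * h * (x 1) ^ 2 + g * h * (x 2) ^ 2) := by
      simp [shallowWaterHmat, Matrix.mulVec, dotProduct, Fin.sum_univ_three]
      field_simp
      ring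
    rw [key]
    have hgpos : 0 < 1 / g := by positivity
    apply mul_pos hgpos
    rcases (by
      by_contra hcon
      push_neg at hcon
      obtain ⟨h0, h1, h2⟩ := hcon
      apply hx
      funext i
      fin_cases i <;> simp_all : x 0 ≠ 0 ∨ x 1 ≠ 0 ∨ x 2 ≠ 0) with h0 | h1 | h2
    · rcases eq_or_ne (x 1) 0 with e1 | e1
      · rcases eq_or_ne (x 2) 0 with e2 | e2
        · rw [e1, e2]; nlinarith [pow_two_pos_of_ne_zero h0]
        · nlinarith [pow_two_pos_of_ne_zero e2, sq_nonneg (x 0 + v1 * x 1 + v2 * x 2), sq_nonneg (x 1), mul_pos hg hh]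
      · nlinarith [pow_two_pos_of_ne_zero e1, sq_nonneg (x 0 + v1 * x 1 + v2 * x 2), sq_nonneg (x 2), mul_pos hg hh]
    · nlinarith [pow_two_pos_of_ne_zero h1, sq_nonneg (x 0 + v1 * x 1 + v2 * x 2), sq_nonneg (x 2), mul_pos hg hh]
    · nlinarith [pow_two_pos_of_ne_zero h2, sq_nonneg (x 0 + v1 * x 1 + v2 * x 2), sq_nonneg (x 1), mul_pos hg hh]
end

section
/- Let N ≥ 1, d ≥ 1, let Q be an (N+1)×(N+1) real matrix satisfying the SBP assumptions with boundary matrix B, set S := 2Q − B, and let ω_0,…,ω_N > 0 be quadrature weights. For each grid node (i,j) ∈ {0,…,N}², let data in ℝ^d be given: two-point fluxes f¹ with f¹_{(i,m)j} = f¹_{(m,i)j} (symmetric in the first pair for each fixed j) and f² with f²_{i(j,m)} = f²_{i(m,j)} (symmetric in the second pair for each fixed i); local factors Φ¹loc_{ij}, Φ²loc_{ij} ∈ ℝ^d; a nodal quantity r_{ij} ∈ ℝ^d; and surface data gL¹_j, gR¹_j, gL²_i, gR²_i ∈ ℝ^d. Define the direction-wise staggered fluxes Γ¹_{(0,−1)j}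 := gL¹_j, Γ¹_{(N,N+1)j} := gR¹_j, and for adjacent pairs (i,k), k = i±1, 0 ≤ i,k ≤ N: Γ¹_{(i,k)j} := ∑_{l=0}^{min(i,k)} ∑_{m=0}^N S_{lm} f¹_{(l,m)j} + Φ¹loc_{ij} ∘ ∑_{l=0}^{min(i,k)} ∑_{m=0}^N S_{lm} (r_{mj} − r_{lj}) + 2 Φ¹loc_{ij} ∘ (r_{0j} − r_{ij}), and Γ²_{i(j,k)} analogously in the second direction with Φ²loc and data f², r_{i·}, gL²_i, gR²_i. Then for every (i,j) ∈ {0,…,N}²: (1/ω_i)(Γ¹_{(i,i−1)j} − Γ¹_{(i,i+1)j}) + (1/ω_j)(Γ²_{i(j,j−1)} − Γ²_{i(j,j+1)}) = (1/ω_i) R¹_{ij} + (1/ω_j) R²_{ij}, where R¹_{ij} := −∑_{m=0}^N S_{im} ( f¹_{(i,m)j} + Φ¹loc_{ij} ∘ (r_{mj} − r_{ij}) ) + δ_{i0} gL¹_j − δ_{iN} gR¹_j and R²_{ij} := −∑_{m=0}^N S_{jm} ( f²_{i(j,m)} + Φ²loc_{ij} ∘ (r_{im} − r_{ij}) ) +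 δ_{j0} gL²_i − δ_{jN} gR²_i; i.e. the two-dimensional tensor-product flux-differencing formula recovers the two-dimensional DGSEM residual at every node. -/
open Finset

lemma oneD {d : ℕ} (N : ℕ) (hN : 1 ≤ N)
    (S : ℕ → ℕ → ℝ)
    (hskew : ∀ l m, l ≤ N → m ≤ N → S m l = -S l m)
    (hrow : ∀ l, l ≤ N → ∑ m ∈ Finset.range (N + 1), S l m
      = (if l = 0 then (1 : ℝ) else 0) - (if l = N then 1 else 0))
    (f : ℕ → ℕ → Fin d → ℝ) (hf : ∀ l m, l ≤ N → m ≤ N → f l m = f m l)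
    (Φ : Fin d → ℝ) (r : ℕ → Fin d → ℝ) (gL gR : Fin d → ℝ)
    (i : ℕ) (hi : i ≤ N)
    (Γ : ℕ → Fin d → ℝ)
    (hΓ : ∀ k, k ≤ N → (k = i + 1 ∨ i = k + 1) →
      Γ k = (∑ l ∈ Finset.range (min i k + 1), ∑ m ∈ Finset.range (N + 1), S l m • f l m)
          + Φ * (∑ l ∈ Finset.range (min i k + 1), ∑ m ∈ Finset.range (N + 1),
              S l m • (r m - r l))
          + (2 : ℝ) • (Φ * (r 0 - r i))) :
    (if i = 0 then gL else Γ (i - 1)) - (if i = N then gR else Γ (i + 1))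
      = -(∑ m ∈ Finset.range (N + 1), S i m • (f i m + Φ * (r m - r i)))
          + (if i = 0 then gL else 0) - (if i = N then gR else 0) := by
  set F : ℕ → Fin d → ℝ :=
    fun l => ∑ m ∈ Finset.range (N + 1), S l m • (f l m + Φ * (r m - r l)) with hF
  -- rewriting lemma: the two sums in Γ combine into partial sums of F
  have key1 : ∀ p : ℕ,
      (∑ l ∈ Finset.range p, ∑ m ∈ Finset.range (N + 1), S l m • f l m)
        + Φ * (∑ l ∈ Finset.range p, ∑ m ∈ Finset.range (N + 1), S l m • (r m - r l))
      = ∑ l ∈ Finset.range p, F l := by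
    intro p
    simp only [hF, Finset.mul_sum, mul_smul_comm, smul_add, ← Finset.sum_add_distrib]
  -- full-sum identity
  have key2 : ∑ l ∈ Finset.range (N + 1), F l = (2 : ℝ) • (Φ * (r N - r 0)) := by
    have expand : ∑ l ∈ Finset.range (N + 1), F l
        = (∑ l ∈ Finset.range (N + 1), ∑ m ∈ Finset.range (N + 1), S l m • f l m)
          + (∑ l ∈ Finset.range (N + 1), ∑ m ∈ Finset.range (N + 1), S l m • (Φ * r m))
          - (∑ l ∈ Finset.range (N + 1), ∑ m ∈ Finset.range (N + 1), S l m • (Φ * r l)) := by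
      simp only [hF, mul_sub, smul_add, smul_sub, Finset.sum_add_distrib,
        Finset.sum_sub_distrib]
      abel
    have hA : (∑ l ∈ Finset.range (N + 1), ∑ m ∈ Finset.range (N + 1), S l m • f l m)
        = 0 := by
      set A := ∑ l ∈ Finset.range (N + 1), ∑ m ∈ Finset.range (N + 1), S l m • f l m with hA
      have hAneg : A = -A := by
        calc A = ∑ m ∈ Finset.range (N + 1), ∑ l ∈ Finset.range (N + 1), S l m • f l m :=
              Finset.sum_comm
        _ = ∑ m ∈ Finset.range (N + 1), ∑ l ∈ Finset.range (N + 1), -(S m l • f m l) := by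
              refine Finset.sum_congr rfl fun m hm => Finset.sum_congr rfl fun l hl => ?_
              rw [Finset.mem_range, Nat.lt_succ_iff] at hm hl
              rw [hskew m l hm hl, hf l m hl hm, neg_smul]
        _ = -A := by simp [hA]
      have h2 : (2 : ℝ) • A = 0 := by rw [two_smul]; nth_rewrite 2 [hAneg]; abel
      have := smul_eq_zero.mp h2
      simpa using this.resolve_left (by norm_num)
    have hcol : ∀ m, m ≤ N → ∑ l ∈ Finset.range (N + 1), S l m
        = (if m = N then (1 : ℝ) else 0) - (if m = 0 then 1 else 0) := by
      intro m hm
      have : ∑ l ∈ Finset.range (N + 1), S l m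
          = -∑ l ∈ Finset.range (N + 1), S m l := by
        rw [← Finset.sum_neg_distrib]
        refine Finset.sum_congr rfl fun l hl => ?_
        rw [Finset.mem_range, Nat.lt_succ_iff] at hl
        rw [hskew m l hm hl]
      rw [this, hrow m hm]; ring
    have hB : (∑ l ∈ Finset.range (N + 1), ∑ m ∈ Finset.range (N + 1), S l m • (Φ * r m))
        = Φ * r N - Φ * r 0 := by
      rw [Finset.sum_comm]
      have : ∀ m ∈ Finset.range (N + 1),
          (∑ l ∈ Finset.range (N + 1), S l m • (Φ * r m))
            = ((if m = N then (1 : ℝ) else 0) - (if m = 0 then 1 else 0)) • (Φ * r m) := by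
        intro m hm
        rw [Finset.mem_range, Nat.lt_succ_iff] at hm
        rw [← Finset.sum_smul, hcol m hm]
      rw [Finset.sum_congr rfl this]
      simp [sub_smul, ite_smul, Finset.sum_sub_distrib, Finset.sum_ite_eq',
        Nat.lt_succ_iff]
    have hC : (∑ l ∈ Finset.range (N + 1), ∑ m ∈ Finset.range (N + 1), S l m • (Φ * r l))
        = Φ * r 0 - Φ * r N := by
      have : ∀ l ∈ Finset.range (N + 1),
          (∑ m ∈ Finset.range (N + 1), S l m • (Φ * r l))
            = ((if l = 0 then (1 : ℝ) else 0) - (if l = N then 1 else 0)) • (Φ * r l) := by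
        intro l hl
        rw [Finset.mem_range, Nat.lt_succ_iff] at hl
        rw [← Finset.sum_smul, hrow l hl]
      rw [Finset.sum_congr rfl this]
      simp [sub_smul, ite_smul, Finset.sum_sub_distrib, Finset.sum_ite_eq',
        Nat.lt_succ_iff]
    rw [expand, hA, hB, hC]
    have : Φ * (r N - r 0) = Φ * r N - Φ * r 0 := by ring
    rw [this, two_smul]; abel
  by_cases hi0 : i = 0
  · subst hi0
    have hiN : (0 : ℕ) ≠ N := by omega
    simp only [if_pos rfl, if_neg hiN]
    have hΓ1 := hΓ 1 (by omega) (Or.inl rfl)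
    have hmin : min 0 1 = 0 := by omega
    rw [hΓ1, hmin, key1 (0 + 1), sub_self, mul_zero, smul_zero, add_zero]
    have e0 : ∑ l ∈ Finset.range (0 + 1), F l = F 0 := by simp
    have e : (∑ m ∈ Finset.range (N + 1), S 0 m • (f 0 m + Φ * (r m - r 0))) = F 0 := rfl
    rw [e0, e]
    abel_nf
    exact add_comm _ _
  · by_cases hiN : i = N
    · simp only [if_neg hi0, if_pos hiN]
      have hΓ1 := hΓ (i - 1) (by omega) (Or.inr (by omega))
      have hmin : min i (i - 1) = i - 1 := by omega
      have hm1 : i - 1 + 1 = i := by omega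
      rw [hΓ1, hmin, hm1, key1 i]
      rw [← hiN] at key2
      have hpart : ∑ l ∈ Finset.range i, F l = (2 : ℝ) • (Φ * (r i - r 0)) - F i := by
        rw [← key2, Finset.sum_range_succ]; abel
      rw [hpart]
      have e : (∑ m ∈ Finset.range (N + 1), S i m • (f i m + Φ * (r m - r i))) = F i := rfl
      rw [e]
      have h1 : Φ * (r 0 - r i) = -(Φ * (r i - r 0)) := by ring
      rw [h1]
      module
    · simp only [if_neg hi0, if_neg hiN]
      have hprev := hΓ (i - 1) (by omega) (Or.inr (by omega))
      have hnext := hΓ (i + 1) (by omega) (Or.inl rfl)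
      have hmin1 : min i (i - 1) = i - 1 := by omega
      have hmin2 : min i (i + 1) = i := by omega
      have hm1 : i - 1 + 1 = i := by omega
      rw [hprev, hnext, hmin1, hmin2, hm1, key1 i, key1 (i + 1),
        Finset.sum_range_succ F i]
      have e : (∑ m ∈ Finset.range (N + 1), S i m • (f i m + Φ * (r m - r i))) = F i := rfl
      rw [e]
      abel





/-- Two-dimensional tensor-product flux-differencing formula. Grid nodes
are pairs `(i,j) ∈ {0,…,N}²`, states are vectors in `ℝ^d`, `*` on `Fin d → ℝ` is the
Hadamard product. `Q` satisfies the SBP assumptions with boundary matrix `B`,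
`S := 2Q − B`, `ω` are positive quadrature weights. `f1 l m j` denotes `f¹_{(l,m)j}`
(symmetric in the first pair), `f2 i l m` denotes `f²_{i(l,m)}` (symmetric in the second
pair), `Γ1 i k j` denotes `Γ¹_{(i,k)j}`, and `Γ2 i j k` denotes `Γ²_{i(j,k)}`. The
direction-wise flux differences, weighted by `1/ω`, recover the two-dimensional DGSEM
residual at every node. -/
theorem stmt_16 (N d : ℕ) (hN : 1 ≤ N) (hd : 1 ≤ d)
    (Q B S : ℕ → ℕ → ℝ)
    (hB : ∀ j k, j ≤ N → k ≤ N →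
      B j k = if j = k then (if j = 0 then (-1 : ℝ) else if j = N then 1 else 0) else 0)
    (hQB : ∀ j k, j ≤ N → k ≤ N → Q j k + Q k j = B j k)
    (hQrow : ∀ j, j ≤ N → ∑ k ∈ Finset.range (N + 1), Q j k = 0)
    (hS : ∀ j k, j ≤ N → k ≤ N → S j k = 2 * Q j k - B j k)
    (ω : ℕ → ℝ) (hω : ∀ i, i ≤ N → 0 < ω i)
    (f1 f2 : ℕ → ℕ → ℕ → Fin d → ℝ)
    (hf1 : ∀ l m j, l ≤ N → m ≤ N → j ≤ N → f1 l m j = f1 m l j)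
    (hf2 : ∀ i l m, i ≤ N → l ≤ N → m ≤ N → f2 i l m = f2 i m l)
    (Φ1loc Φ2loc r : ℕ → ℕ → Fin d → ℝ)
    (gL1 gR1 gL2 gR2 : ℕ → Fin d → ℝ)
    (Γ1 : ℕ → ℕ → ℕ → Fin d → ℝ)
    (hΓ1 : ∀ i k j, i ≤ N → k ≤ N → j ≤ N → (k = i + 1 ∨ i = k + 1) →
      Γ1 i k j =
        (∑ l ∈ Finset.range (min i k + 1), ∑ m ∈ Finset.range (N + 1), S l m • f1 l m j)
          + Φ1loc i j * (∑ l ∈ Finset.range (min i k + 1), ∑ m ∈ Finset.range (N + 1),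
              S l m • (r m j - r l j))
          + (2 : ℝ) • (Φ1loc i j * (r 0 j - r i j)))
    (Γ2 : ℕ → ℕ → ℕ → Fin d → ℝ)
    (hΓ2 : ∀ i j k, i ≤ N → j ≤ N → k ≤ N → (k = j + 1 ∨ j = k + 1) →
      Γ2 i j k =
        (∑ l ∈ Finset.range (min j k + 1), ∑ m ∈ Finset.range (N + 1), S l m • f2 i l m)
          + Φ2loc i j * (∑ l ∈ Finset.range (min j k + 1), ∑ m ∈ Finset.range (N + 1),
              S l m • (r i m - r i l))
          + (2 : ℝ) • (Φ2loc i j * (r i 0 - r i j))) :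
    ∀ i j, i ≤ N → j ≤ N →
      (ω i)⁻¹ • ((if i = 0 then gL1 j else Γ1 i (i - 1) j)
          - (if i = N then gR1 j else Γ1 i (i + 1) j))
        + (ω j)⁻¹ • ((if j = 0 then gL2 i else Γ2 i j (j - 1))
          - (if j = N then gR2 i else Γ2 i j (j + 1)))
      = (ω i)⁻¹ •
          (-(∑ m ∈ Finset.range (N + 1), S i m • (f1 i m j + Φ1loc i j * (r m j - r i j)))
            + (if i = 0 then gL1 j else 0) - (if i = N then gR1 j else 0))
        + (ω j)⁻¹ •
          (-(∑ m ∈ Finset.range (N + 1), S j m • (f2 i j m + Φ2loc i j * (r i m - r i j)))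
            + (if j = 0 then gL2 i else 0) - (if j = N then gR2 i else 0)) := by

  have hskew : ∀ l m, l ≤ N → m ≤ N → S m l = -S l m := by
    intro l m hl hm
    have hb : B m l = B l m := by
      rw [hB m l hm hl, hB l m hl hm]
      by_cases h : l = m
      · subst h; simp
      · rw [if_neg h, if_neg (fun hh => h hh.symm)]
    rw [hS m l hm hl, hS l m hl hm, hb]
    have := hQB l m hl hm
    linarith
  have hrow' : ∀ l, l ≤ N → ∑ m ∈ Finset.range (N + 1), S l m
      = (if l = 0 then (1 : ℝ) else 0) - (if l = N then 1 else 0) := by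
    intro l hl
    have hsum : ∑ m ∈ Finset.range (N + 1), S l m
        = 2 * (∑ m ∈ Finset.range (N + 1), Q l m)
          - ∑ m ∈ Finset.range (N + 1), B l m := by
      rw [Finset.sum_congr rfl (fun m hm => hS l m hl
        (by rw [Finset.mem_range, Nat.lt_succ_iff] at hm; exact hm))]
      rw [Finset.sum_sub_distrib, Finset.mul_sum]
    have hBsum : ∑ m ∈ Finset.range (N + 1), B l m
        = (if l = 0 then (-1 : ℝ) else if l = N then 1 else 0) := by
      have hcong : ∀ m ∈ Finset.range (N + 1), B l m
          = if m = l then (if l = 0 then (-1 : ℝ) else if l = N then 1 else 0) else 0 := by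
        intro m hm
        rw [Finset.mem_range, Nat.lt_succ_iff] at hm
        rw [hB l m hl hm]
        by_cases h : l = m
        · subst h; simp
        · rw [if_neg h, if_neg (fun hh => h hh.symm)]
      rw [Finset.sum_congr rfl hcong, Finset.sum_ite_eq']
      simp [Nat.lt_succ_iff, hl]
    rw [hsum, hQrow l hl, hBsum]
    split_ifs <;> first | (exfalso; omega) | ring
  intro i j hi hj
  have h1 : (if i = 0 then gL1 j else Γ1 i (i - 1) j)
        - (if i = N then gR1 j else Γ1 i (i + 1) j)
      = -(∑ m ∈ Finset.range (N + 1), S i m • (f1 i m j + Φ1loc i j * (r m j - r i j)))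
          + (if i = 0 then gL1 j else 0) - (if i = N then gR1 j else 0) :=
    oneD N hN S hskew hrow' (fun l m => f1 l m j)
      (fun l m hl hm => hf1 l m j hl hm hj) (Φ1loc i j) (fun m => r m j)
      (gL1 j) (gR1 j) i hi (fun k => Γ1 i k j)
      (fun k hk hadj => hΓ1 i k j hi hk hj hadj)
  have h2 : (if j = 0 then gL2 i else Γ2 i j (j - 1))
        - (if j = N then gR2 i else Γ2 i j (j + 1))
      = -(∑ m ∈ Finset.range (N + 1), S j m • (f2 i j m + Φ2loc i j * (r i m - r i j)))
          + (if j = 0 then gL2 i else 0) - (if j = N then gR2 i else 0) :=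
    oneD N hN S hskew hrow' (fun l m => f2 i l m)
      (fun l m hl hm => hf2 i l m hi hl hm) (Φ2loc i j) (fun m => r i m)
      (gL2 i) (gR2 i) j hj (fun k => Γ2 i j k)
      (fun k hk hadj => hΓ2 i j k hi hj hk hadj)
  rw [h1, h2]
end
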